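/- arXiv:2207.11133 — 4 statements merged into one kernel-verified Lean document; each statement's English description precedes it below -/
import Mathlib

section
/- Suppose S : ℝ × ℝ → ℝ and J : ℝ × ℝ → ℝ are twice continuously differentiable functions of (x,t), F : ℝ → ℝ is continuously differentiable, and τ, D are real constants. If for all (x,t) the conservation law ∂S/∂t = −∂J/∂x + F(S(x,t)) holds and the Maxwell–Cattaneo law J(x,t) + τ·∂J/∂t = −D·∂S/∂x holds, then for all (x,t) the Telegraph equation τ·∂²S/∂t² + (1 − τ·F′(S(x,t)))·∂S/∂t = D·∂²S/∂x² + F(S(x,t)) holds. -/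
private lemma slice_t {f : ℝ × ℝ → ℝ} (hf : Differentiable ℝ f) (x t : ℝ) :
    HasDerivAt (fun s => f (x, s)) (fderiv ℝ f (x, t) (0, 1)) t := by
  have h1 : HasDerivAt (fun s : ℝ => (x, s)) ((0 : ℝ), (1 : ℝ)) t :=
    (hasDerivAt_const t x).prodMk (hasDerivAt_id t)
  exact (hf (x, t)).hasFDerivAt.comp_hasDerivAt t h1

private lemma slice_x {f : ℝ × ℝ → ℝ} (hf : Differentiable ℝ f) (x t : ℝ) :
    HasDerivAt (fun y => f (y, t)) (fderiv ℝ f (x, t) (1, 0)) x := by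
  have h1 : HasDerivAt (fun y : ℝ => (y, t)) ((1 : ℝ), (0 : ℝ)) x :=
    (hasDerivAt_id x).prodMk (hasDerivAt_const x t)
  exact (hf (x, t)).hasFDerivAt.comp_hasDerivAt x h1

private lemma slice2_t {f : ℝ × ℝ → ℝ} (hf : ContDiff ℝ 2 f) (x t : ℝ) (v : ℝ × ℝ) :
    HasDerivAt (fun s => fderiv ℝ f (x, s) v)
      (fderiv ℝ (fderiv ℝ f) (x, t) (0, 1) v) t := by
  have hdf : Differentiable ℝ (fderiv ℝ f) :=
    (hf.fderiv_right (m := 1) le_rfl).differentiable one_ne_zero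
  have h1 : HasDerivAt (fun s : ℝ => (x, s)) ((0 : ℝ), (1 : ℝ)) t :=
    (hasDerivAt_const t x).prodMk (hasDerivAt_id t)
  have h2 : HasDerivAt (fun s => fderiv ℝ f (x, s))
      (fderiv ℝ (fderiv ℝ f) (x, t) (0, 1)) t :=
    (hdf (x, t)).hasFDerivAt.comp_hasDerivAt t h1
  have := h2.clm_apply (hasDerivAt_const t v)
  simpa using this

private lemma slice2_x {f : ℝ × ℝ → ℝ} (hf : ContDiff ℝ 2 f) (x t : ℝ) (v : ℝ × ℝ) :
    HasDerivAt (fun y => fderiv ℝ f (y, t) v)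
      (fderiv ℝ (fderiv ℝ f) (x, t) (1, 0) v) x := by
  have hdf : Differentiable ℝ (fderiv ℝ f) :=
    (hf.fderiv_right (m := 1) le_rfl).differentiable one_ne_zero
  have h1 : HasDerivAt (fun y : ℝ => (y, t)) ((1 : ℝ), (0 : ℝ)) x :=
    (hasDerivAt_id x).prodMk (hasDerivAt_const x t)
  have h2 : HasDerivAt (fun y => fderiv ℝ f (y, t))
      (fderiv ℝ (fderiv ℝ f) (x, t) (1, 0)) x :=
    (hdf (x, t)).hasFDerivAt.comp_hasDerivAt x h1
  have := h2.clm_apply (hasDerivAt_const x v)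
  simpa using this

/-- Derivation of the Telegraph Predator-Prey equation from the conservation law
and the Maxwell–Cattaneo delayed diffusion law. -/
theorem telegraph_derivation (S J : ℝ × ℝ → ℝ) (F : ℝ → ℝ) (τ D : ℝ)
    (hS : ContDiff ℝ 2 S) (hJ : ContDiff ℝ 2 J) (hF : ContDiff ℝ 1 F)
    (hcons : ∀ x t : ℝ,
      deriv (fun s => S (x, s)) t = -(deriv (fun y => J (y, t)) x) + F (S (x, t)))
    (hMC : ∀ x t : ℝ,
      J (x, t) + τ * deriv (fun s => J (x, s)) t = -(D * deriv (fun y => S (y, t)) x)) :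
    ∀ x t : ℝ,
      τ * deriv (fun s => deriv (fun s' => S (x, s')) s) t
        + (1 - τ * deriv F (S (x, t))) * deriv (fun s => S (x, s)) t
      = D * deriv (fun y => deriv (fun y' => S (y', t)) y) x + F (S (x, t)) := by
  intro x t
  have hSd : Differentiable ℝ S := hS.differentiable (by norm_num)
  have hJd : Differentiable ℝ J := hJ.differentiable (by norm_num)
  have hFd : Differentiable ℝ F := hF.differentiable one_ne_zero
  -- rewrite hypotheses in fderiv form
  have hcons' : ∀ x t : ℝ,
      fderiv ℝ S (x, t) (0, 1) = -(fderiv ℝ J (x, t) (1, 0)) + F (S (x, t)) := by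
    intro x t
    rw [← (slice_t hSd x t).deriv, ← (slice_x hJd x t).deriv]
    exact hcons x t
  have hMC' : ∀ x t : ℝ,
      J (x, t) + τ * fderiv ℝ J (x, t) (0, 1) = -(D * fderiv ℝ S (x, t) (1, 0)) := by
    intro x t
    rw [← (slice_t hJd x t).deriv, ← (slice_x hSd x t).deriv]
    exact hMC x t
  -- differentiate conservation law in t
  have hL1 : HasDerivAt (fun s => fderiv ℝ S (x, s) (0, 1))
      (fderiv ℝ (fderiv ℝ S) (x, t) (0, 1) (0, 1)) t := slice2_t hS x t _
  have hR1 : HasDerivAt (fun s => -(fderiv ℝ J (x, s) (1, 0)) + F (S (x, s)))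
      (-(fderiv ℝ (fderiv ℝ J) (x, t) (0, 1) (1, 0))
        + deriv F (S (x, t)) * fderiv ℝ S (x, t) (0, 1)) t := by
    have hFc : HasDerivAt (fun s => F (S (x, s)))
        (deriv F (S (x, t)) * fderiv ℝ S (x, t) (0, 1)) t :=
      (hFd (S (x, t))).hasDerivAt.comp t (slice_t hSd x t)
    exact ((slice2_t hJ x t _).neg).add hFc
  have key1 : fderiv ℝ (fderiv ℝ S) (x, t) (0, 1) (0, 1)
      = -(fderiv ℝ (fderiv ℝ J) (x, t) (0, 1) (1, 0))
        + deriv F (S (x, t)) * fderiv ℝ S (x, t) (0, 1) := by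
    have : (fun s => fderiv ℝ S (x, s) (0, 1))
        = fun s => -(fderiv ℝ J (x, s) (1, 0)) + F (S (x, s)) := funext fun s => hcons' x s
    exact hL1.unique (this ▸ hR1)
  -- differentiate Maxwell–Cattaneo law in x
  have hL2 : HasDerivAt (fun y => J (y, t) + τ * fderiv ℝ J (y, t) (0, 1))
      (fderiv ℝ J (x, t) (1, 0) + τ * fderiv ℝ (fderiv ℝ J) (x, t) (1, 0) (0, 1)) x :=
    (slice_x hJd x t).add ((slice2_x hJ x t _).const_mul τ)
  have hR2 : HasDerivAt (fun y => -(D * fderiv ℝ S (y, t) (1, 0)))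
      (-(D * fderiv ℝ (fderiv ℝ S) (x, t) (1, 0) (1, 0))) x :=
    ((slice2_x hS x t _).const_mul D).neg
  have key2 : fderiv ℝ J (x, t) (1, 0) + τ * fderiv ℝ (fderiv ℝ J) (x, t) (1, 0) (0, 1)
      = -(D * fderiv ℝ (fderiv ℝ S) (x, t) (1, 0) (1, 0)) := by
    have : (fun y => J (y, t) + τ * fderiv ℝ J (y, t) (0, 1))
        = fun y => -(D * fderiv ℝ S (y, t) (1, 0)) := funext fun y => hMC' y t
    exact hL2.unique (this ▸ hR2)
  -- symmetry of second derivative of J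
  have hsym : fderiv ℝ (fderiv ℝ J) (x, t) (0, 1) (1, 0)
      = fderiv ℝ (fderiv ℝ J) (x, t) (1, 0) (0, 1) :=
    (hJ.contDiffAt.isSymmSndFDerivAt (by norm_num)) _ _
  -- rewrite goal in fderiv form
  have e1 : deriv (fun s => deriv (fun s' => S (x, s')) s) t
      = fderiv ℝ (fderiv ℝ S) (x, t) (0, 1) (0, 1) := by
    have : (fun s => deriv (fun s' => S (x, s')) s)
        = fun s => fderiv ℝ S (x, s) (0, 1) := funext fun s => (slice_t hSd x s).deriv
    rw [this]; exact (slice2_t hS x t _).deriv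
  have e2 : deriv (fun y => deriv (fun y' => S (y', t)) y) x
      = fderiv ℝ (fderiv ℝ S) (x, t) (1, 0) (1, 0) := by
    have : (fun y => deriv (fun y' => S (y', t)) y)
        = fun y => fderiv ℝ S (y, t) (1, 0) := funext fun y => (slice_x hSd y t).deriv
    rw [this]; exact (slice2_x hS x t _).deriv
  rw [e1, e2, (slice_t hSd x t).deriv]
  have h0 := hcons' x t
  linear_combination τ * key1 - τ * hsym - key2 + h0
end

section
/- Let D > 0, Δx > 0, and let m, ξ be real numbers such that 2·D·sin²(ξ/2) − (Δx²/2)·m > 0. Then for every real Δt ≥ 0, the von Neumann condition |1 − 4·(Δt·D/Δx²)·sin²(ξ/2) + Δt·m| ≤ 1 holds if and only if Δt ≤ Δx² / (2·D·sin²(ξ/2) − (Δx²/2)·m). -/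
/-!
Writing `c = 2 D sin²(ξ/2) - (Δx²/2) m`, the amplification factor of the scheme is
`1 - 2 Δt c / Δx²`. For `Δt ≥ 0` and `c > 0` the subtracted term is nonnegative, so the
condition `|1 - a| ≤ 1`, i.e. `0 ≤ a ≤ 2`, reduces to `2 Δt c / Δx² ≤ 2`, i.e. `Δt ≤ Δx² / c`.
-/

theorem abs_sub_le_self_iff {α : Type*} [AddCommGroup α] [LinearOrder α] [IsOrderedAddMonoid α]
    (a c : α) : |c - a| ≤ c ↔ 0 ≤ a ∧ a ≤ c + c := by
  rw [abs_sub_le_iff, sub_le_self_iff, sub_le_iff_le_add]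

theorem abs_one_sub_two_mul_div_le_one_iff {t c h : ℝ} (ht : 0 ≤ t) (hc : 0 < c) (hh : 0 < h) :
    |1 - 2 * (t * c) / h| ≤ 1 ↔ t ≤ h / c := by
  rw [abs_sub_le_self_iff, le_div_iff₀ hc, div_le_iff₀ hh]
  have hnonneg : 0 ≤ 2 * (t * c) / h := by positivity
  exact ⟨fun hle => by linarith [hle.2], fun hle => ⟨hnonneg, by linarith⟩⟩

theorem vonNeumann_condition_reactive_general (D Δx m ξ : ℝ) (hΔx : 0 < Δx)
    (hpos : 0 < 2 * D * Real.sin (ξ / 2) ^ 2 - Δx ^ 2 / 2 * m) :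
    ∀ Δt : ℝ, 0 ≤ Δt →
      (|1 - 4 * (Δt * D / Δx ^ 2) * Real.sin (ξ / 2) ^ 2 + Δt * m| ≤ 1 ↔
        Δt ≤ Δx ^ 2 / (2 * D * Real.sin (ξ / 2) ^ 2 - Δx ^ 2 / 2 * m)) := by
  intro Δt hΔt
  have hfactor : 1 - 4 * (Δt * D / Δx ^ 2) * Real.sin (ξ / 2) ^ 2 + Δt * m
      = 1 - 2 * (Δt * (2 * D * Real.sin (ξ / 2) ^ 2 - Δx ^ 2 / 2 * m)) / Δx ^ 2 := by
    field_simp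
    ring
  rw [hfactor]
  exact abs_one_sub_two_mul_div_le_one_iff hΔt hpos (by positivity)

/-- Von Neumann stability condition for the diffusive predator-prey scheme with
linearized reactive coefficient `m`. -/
theorem vonNeumann_condition_reactive (D Δx m ξ : ℝ) (hD : 0 < D) (hΔx : 0 < Δx)
    (hpos : 0 < 2 * D * Real.sin (ξ / 2) ^ 2 - Δx ^ 2 / 2 * m) :
    ∀ Δt : ℝ, 0 ≤ Δt →
      (|1 - 4 * (Δt * D / Δx ^ 2) * Real.sin (ξ / 2) ^ 2 + Δt * m| ≤ 1 ↔
        Δt ≤ Δx ^ 2 / (2 * D * Real.sin (ξ / 2) ^ 2 - Δx ^ 2 / 2 * m)) :=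
  vonNeumann_condition_reactive_general D Δx m ξ hΔx hpos
end

section
/- Let r, σ, ξ be real numbers with 0 < r ≤ 1 and 0 ≤ σ ≤ 1/4, set β = 1 − 2σ·r·sin²(ξ/2) − r/2, and suppose β² − 1 + r ≥ 0. Then both real roots g± = β ± √(β² − 1 + r) of the equation z² − 2β·z + (1 − r) = 0 satisfy −1 ≤ g± ≤ 1. -/
/-!
The roots of `z² - 2βz + c` are `β ± √(β² - c)`, and for a monic real quadratic with `c ≤ 1` both
roots lie in `[-1, 1]` as soon as `2|β| ≤ 1 + c` (the Schur–Cohn condition: `√(β² - c) ≤ 1 ∓ β`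
squares to `∓2β ≤ 1 + c`). For the Telegraph scheme `c = 1 - r`, so it remains to see that
`|β| ≤ 1 - r/2`, which is where `σ ≤ 1/4` and `r ≤ 1` enter.
-/

open Real Set

theorem quadratic_eq_zero_of_sq_eq {β c s : ℝ} (hs : s ^ 2 = β ^ 2 - c) :
    (β + s) ^ 2 - 2 * β * (β + s) + c = 0 ∧ (β - s) ^ 2 - 2 * β * (β - s) + c = 0 :=
  ⟨by linear_combination hs, by linear_combination hs⟩

theorem add_sub_sqrt_mem_Icc {β c : ℝ} (hc : c ≤ 1) (hβ : 2 * |β| ≤ 1 + c) :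
    β + √(β ^ 2 - c) ∈ Icc (-1) 1 ∧ β - √(β ^ 2 - c) ∈ Icc (-1) 1 := by
  obtain ⟨hβ_lower, hβ_upper⟩ := abs_le.1 (show |β| ≤ 1 by linarith)
  have h_upper : √(β ^ 2 - c) ≤ 1 - β :=
    sqrt_le_iff.2 ⟨by linarith, by nlinarith [le_abs_self β]⟩
  have h_lower : √(β ^ 2 - c) ≤ 1 + β :=
    sqrt_le_iff.2 ⟨by linarith, by nlinarith [neg_abs_le β]⟩
  have h_nonneg := sqrt_nonneg (β ^ 2 - c)
  exact ⟨⟨by linarith, by linarith⟩, ⟨by linarith, by linarith⟩⟩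

theorem abs_one_sub_two_mul_sub_half_le {r σ t : ℝ} (hr0 : 0 ≤ r) (hr1 : r ≤ 1)
    (hσ0 : 0 ≤ σ) (hσ1 : σ ≤ 1 / 4) (ht0 : 0 ≤ t) (ht1 : t ≤ 1) :
    |1 - 2 * σ * r * t - r / 2| ≤ 1 - r / 2 := by
  have hσt0 : 0 ≤ σ * t := mul_nonneg hσ0 ht0
  have hσt1 : σ * t ≤ 1 / 4 := by nlinarith
  rw [abs_le]
  constructor <;> nlinarith [mul_nonneg hr0 hσt0, mul_nonneg hr0 (sub_nonneg.2 hσt1)]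

/-- Case II of the von Neumann stability analysis of the Telegraph scheme: when the
discriminant is nonnegative, `0 < r ≤ 1` and `0 ≤ σ ≤ 1/4`, both real amplification
factors `β ± √(β² − 1 + r)` lie in `[-1, 1]`. -/
theorem vonNeumann_telegraph_real_case (r σ ξ : ℝ) (hr0 : 0 < r) (hr1 : r ≤ 1)
    (hσ0 : 0 ≤ σ) (hσ1 : σ ≤ 1 / 4)
    (β : ℝ) (hβ : β = 1 - 2 * σ * r * Real.sin (ξ / 2) ^ 2 - r / 2)
    (hd : β ^ 2 - 1 + r ≥ 0) :
    ((β + Real.sqrt (β ^ 2 - 1 + r)) ^ 2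
        - 2 * β * (β + Real.sqrt (β ^ 2 - 1 + r)) + (1 - r) = 0
      ∧ (β - Real.sqrt (β ^ 2 - 1 + r)) ^ 2
        - 2 * β * (β - Real.sqrt (β ^ 2 - 1 + r)) + (1 - r) = 0)
    ∧ (-1 ≤ β + Real.sqrt (β ^ 2 - 1 + r) ∧ β + Real.sqrt (β ^ 2 - 1 + r) ≤ 1)
    ∧ (-1 ≤ β - Real.sqrt (β ^ 2 - 1 + r) ∧ β - Real.sqrt (β ^ 2 - 1 + r) ≤ 1) := by
  have h_abs : |β| ≤ 1 - r / 2 := hβ ▸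
    abs_one_sub_two_mul_sub_half_le hr0.le hr1 hσ0 hσ1 (sq_nonneg _) (sin_sq_le_one _)
  have h_disc : β ^ 2 - 1 + r = β ^ 2 - (1 - r) := by ring
  rw [h_disc] at hd ⊢
  exact ⟨quadratic_eq_zero_of_sq_eq (sq_sqrt hd),
    add_sub_sqrt_mem_Icc (by linarith) (by linarith)⟩
end

section
/- Let τ > 0, Δt, D, Δx be real numbers with 0 < Δt ≤ τ, Δx > 0, D ≥ 0, and suppose σ := D·Δt/Δx² ≤ 1/4. Then for every real ξ, every complex root z of the characteristic equation z² − 2β·z + (1 − Δt/τ) = 0, where β = 1 − 2σ·(Δt/τ)·sin²(ξ/2) − Δt/(2τ), satisfies |z| ≤ 1. -/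
set_option maxHeartbeats 1000000

/-- Overall von Neumann stability of the Telegraph scheme: if `0 < Δt ≤ τ` and
`σ = D·Δt/Δx² ≤ 1/4`, then every complex root of the characteristic quadratic has
modulus at most `1`. -/
theorem vonNeumann_telegraph_stability (τ Δt D Δx : ℝ)
    (hτ : 0 < τ) (hΔt : 0 < Δt) (hΔtτ : Δt ≤ τ) (hΔx : 0 < Δx) (hD : 0 ≤ D)
    (hσ : D * Δt / Δx ^ 2 ≤ 1 / 4) :
    ∀ ξ : ℝ, ∀ z : ℂ,
      z ^ 2
          - 2 * ((1 - 2 * (D * Δt / Δx ^ 2) * (Δt / τ) * Real.sin (ξ / 2) ^ 2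
              - Δt / (2 * τ) : ℝ) : ℂ) * z
          + ((1 : ℂ) - ((Δt / τ : ℝ) : ℂ)) = 0 →
        ‖z‖ ≤ 1 := by
  intro ξ z hz
  obtain ⟨σ', hσ'⟩ : ∃ a, D * Δt / Δx ^ 2 = a := ⟨_, rfl⟩
  obtain ⟨s, hsdef⟩ : ∃ a, Real.sin (ξ / 2) ^ 2 = a := ⟨_, rfl⟩
  obtain ⟨r, hrdef⟩ : ∃ a, Δt / τ = a := ⟨_, rfl⟩
  rw [hσ'] at hz hσ
  rw [hsdef, hrdef] at hz
  have hσ0 : 0 ≤ σ' := hσ' ▸ by positivity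
  have hs0 : 0 ≤ s := hsdef ▸ sq_nonneg _
  have hs1 : s ≤ 1 := hsdef ▸ Real.sin_sq_le_one _
  have hr0 : 0 < r := hrdef ▸ by positivity
  have hr1 : r ≤ 1 := hrdef ▸ (div_le_one hτ).mpr hΔtτ
  have hb2 : Δt / (2 * τ) = r / 2 := by rw [← hrdef]; ring
  obtain ⟨b, hbdef⟩ : ∃ a, 1 - 2 * σ' * r * s - r / 2 = a := ⟨_, rfl⟩
  rw [hb2, hbdef] at hz
  have hB : 1 - 2 * b + (1 - r) ≥ 0 := by
    rw [← hbdef]; nlinarith [mul_nonneg (mul_nonneg hσ0 hr0.le) hs0]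
  have hC : 1 + 2 * b + (1 - r) ≥ 0 := by
    rw [← hbdef]
    nlinarith [mul_nonneg hr0.le (mul_nonneg hs0 (by linarith : (0:ℝ) ≤ 1/4 - σ')),
      mul_nonneg hr0.le (mul_nonneg hσ0 (by linarith : (0:ℝ) ≤ 1 - s))]
  obtain ⟨x, hx⟩ : ∃ a, z.re = a := ⟨_, rfl⟩
  obtain ⟨y, hy⟩ : ∃ a, z.im = a := ⟨_, rfl⟩
  have hre : x ^ 2 - y ^ 2 - 2 * b * x + (1 - r) = 0 := by
    have h := congrArg Complex.re hz
    simp [pow_two, Complex.mul_re, Complex.mul_im, hx, hy] at h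
    linarith
  have him : 2 * y * (x - b) = 0 := by
    have h := congrArg Complex.im hz
    simp [pow_two, Complex.mul_re, Complex.mul_im, hx, hy] at h
    nlinarith [h]
  have hsq : ‖z‖ ^ 2 = x ^ 2 + y ^ 2 := by
    rw [Complex.sq_norm, Complex.normSq_apply, hx, hy]; ring
  have key : x ^ 2 + y ^ 2 ≤ 1 := by
    rcases mul_eq_zero.mp him with h | h
    · have hy0 : y = 0 := by linarith
      have hre' : x ^ 2 - 2 * b * x + (1 - r) = 0 := by rw [hy0] at hre; linarith
      have e1 : (x - 1) * (x - (1 - r)) = -(1 - 2 * b + (1 - r)) * x := by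
        linear_combination hre'
      have e2 : (x + 1) * (x + (1 - r)) = (1 + 2 * b + (1 - r)) * x := by
        linear_combination hre'
      have e3 : (x ^ 2 - 1) * (x ^ 2 - (1 - r) ^ 2)
          = -((1 - 2 * b + (1 - r)) * (1 + 2 * b + (1 - r))) * x ^ 2 := by
        calc (x ^ 2 - 1) * (x ^ 2 - (1 - r) ^ 2)
            = ((x - 1) * (x - (1 - r))) * ((x + 1) * (x + (1 - r))) := by ring
          _ = (-(1 - 2 * b + (1 - r)) * x) * ((1 + 2 * b + (1 - r)) * x) := by rw [e1, e2]
          _ = -((1 - 2 * b + (1 - r)) * (1 + 2 * b + (1 - r))) * x ^ 2 := by ring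
      have hneg : (x ^ 2 - 1) * (x ^ 2 - (1 - r) ^ 2) ≤ 0 := by
        rw [e3]; nlinarith [mul_nonneg hB hC, sq_nonneg x]
      have hc1 : (1 - r) ^ 2 ≤ 1 := by nlinarith
      rw [hy0]
      nlinarith [hneg, hc1, sq_nonneg (x ^ 2 - 1)]
    · have hxb : x = b := by linarith
      nlinarith [hre, hr0, sq_nonneg y]
  nlinarith [norm_nonneg z, hsq, key]
end
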